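/- Normalization for simply typed lambda calculus: there is a function nbe from well-typed terms (up to βη-equality) to normal forms such that (1) βη-equal terms have equal normal forms, (2) terms with equal normal forms are βη-equal, and (3) every normal form, viewed as a term, is mapped to itself. -/

import Mathlib

/-! Simply typed lambda calculus with unit, products, functions and a base
type `Ans` with two constants `yes`, `no` (no eliminator), in intrinsically
typed de Bruijn representation, together with βη judgemental equality and
normal/neutral forms. -/

/-- Types of the STLC. -/
inductive Ty : Type
  | unit : Ty
  | ans : Ty
  | prod : Ty → Ty → Ty
  | arrow : Ty → Ty → Ty

/-- Contexts are lists of types (de Bruijn). -/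
abbrev Ctx := List Ty

/-- Typed de Bruijn variables. -/
inductive Var : Ctx → Ty → Type
  | zero {Γ A} : Var (A :: Γ) A
  | succ {Γ A B} : Var Γ A → Var (B :: Γ) A

/-- Well-typed terms. -/
inductive Tm : Ctx → Ty → Type
  | var {Γ A} : Var Γ A → Tm Γ A
  | yes {Γ} : Tm Γ .ans
  | no {Γ} : Tm Γ .ans
  | unit {Γ} : Tm Γ .unit
  | pair {Γ A B} : Tm Γ A → Tm Γ B → Tm Γ (.prod A B)
  | fst {Γ A B} : Tm Γ (.prod A B) → Tm Γ A
  | snd {Γ A B} : Tm Γ (.prod A B) → Tm Γ B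
  | lam {Γ A B} : Tm (A :: Γ) B → Tm Γ (.arrow A B)
  | app {Γ A B} : Tm Γ (.arrow A B) → Tm Γ A → Tm Γ B

/-- A renaming `Θ ⊢ σ : Γ` maps variables of `Γ` to variables of `Θ`. -/
def Ren (Θ Γ : Ctx) : Type := ∀ A, Var Γ A → Var Θ A

/-- Extend a renaming under a binder. -/
def Ren.lift {Θ Γ : Ctx} {A : Ty} (r : Ren Θ Γ) : Ren (A :: Θ) (A :: Γ) :=
  fun _ v =>
    match v with
    | .zero => .zero
    | .succ v => .succ (r _ v)

/-- The weakening renaming. -/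
def Ren.wk {Γ : Ctx} {A : Ty} : Ren (A :: Γ) Γ := fun _ v => .succ v

/-- Action of renamings on terms. -/
def rename {Θ Γ : Ctx} (r : Ren Θ Γ) : ∀ {A}, Tm Γ A → Tm Θ A
  | _, .var v => .var (r _ v)
  | _, .yes => .yes
  | _, .no => .no
  | _, .unit => .unit
  | _, .pair a b => .pair (rename r a) (rename r b)
  | _, .fst p => .fst (rename r p)
  | _, .snd p => .snd (rename r p)
  | _, .lam t => .lam (rename r.lift t)
  | _, .app f a => .app (rename r f) (rename r a)

/-- A substitution `Θ ⊢ σ : Γ` maps variables of `Γ` to terms over `Θ`. -/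
def Subst (Θ Γ : Ctx) : Type := ∀ A, Var Γ A → Tm Θ A

/-- Extend a substitution under a binder. -/
def Subst.lift {Θ Γ : Ctx} {A : Ty} (s : Subst Θ Γ) : Subst (A :: Θ) (A :: Γ) :=
  fun _ v =>
    match v with
    | .zero => .var .zero
    | .succ v => rename Ren.wk (s _ v)

/-- Action of substitutions on terms. -/
def subst {Θ Γ : Ctx} (s : Subst Θ Γ) : ∀ {A}, Tm Γ A → Tm Θ A
  | _, .var v => s _ v
  | _, .yes => .yes
  | _, .no => .no
  | _, .unit => .unit
  | _, .pair a b => .pair (subst s a) (subst s b)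
  | _, .fst p => .fst (subst s p)
  | _, .snd p => .snd (subst s p)
  | _, .lam t => .lam (subst s.lift t)
  | _, .app f a => .app (subst s f) (subst s a)

/-- The substitution sending the last variable to `a` and the others to
themselves. -/
def Subst.single {Γ : Ctx} {A : Ty} (a : Tm Γ A) : Subst Γ (A :: Γ)
  | _, .zero => a
  | _, .succ v => .var v

/-- Substitution of a single term for the last variable. -/
def subst1 {Γ : Ctx} {A B : Ty} (a : Tm Γ A) (t : Tm (A :: Γ) B) : Tm Γ B :=
  subst (Subst.single a) t

/-- βη judgemental equality of well-typed terms. -/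
inductive Jeq : ∀ {Γ : Ctx} {A : Ty}, Tm Γ A → Tm Γ A → Prop
  | refl {Γ A} (t : Tm Γ A) : Jeq t t
  | symm {Γ A} {t s : Tm Γ A} : Jeq t s → Jeq s t
  | trans {Γ A} {t s u : Tm Γ A} : Jeq t s → Jeq s u → Jeq t u
  | pair_congr {Γ A B} {a a' : Tm Γ A} {b b' : Tm Γ B} :
      Jeq a a' → Jeq b b' → Jeq (.pair a b) (.pair a' b')
  | fst_congr {Γ A B} {p p' : Tm Γ (.prod A B)} : Jeq p p' → Jeq (.fst p) (.fst p')
  | snd_congr {Γ A B} {p p' : Tm Γ (.prod A B)} : Jeq p p' → Jeq (.snd p) (.snd p')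
  | lam_congr {Γ A B} {t t' : Tm (A :: Γ) B} : Jeq t t' → Jeq (.lam t) (.lam t')
  | app_congr {Γ A B} {f f' : Tm Γ (.arrow A B)} {a a' : Tm Γ A} :
      Jeq f f' → Jeq a a' → Jeq (.app f a) (.app f' a')
  | beta {Γ A B} (t : Tm (A :: Γ) B) (a : Tm Γ A) :
      Jeq (.app (.lam t) a) (subst1 a t)
  | eta {Γ A B} (f : Tm Γ (.arrow A B)) :
      Jeq f (.lam (.app (rename Ren.wk f) (.var .zero)))
  | beta_fst {Γ A B} (a : Tm Γ A) (b : Tm Γ B) : Jeq (.fst (.pair a b)) a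
  | beta_snd {Γ A B} (a : Tm Γ A) (b : Tm Γ B) : Jeq (.snd (.pair a b)) b
  | eta_pair {Γ A B} (p : Tm Γ (.prod A B)) : Jeq p (.pair (.fst p) (.snd p))
  | eta_unit {Γ} (t : Tm Γ .unit) : Jeq t .unit

mutual
  /-- Normal forms. -/
  inductive Nf : ∀ {Γ : Ctx} {A : Ty}, Tm Γ A → Prop
    | yes {Γ} : Nf (.yes : Tm Γ .ans)
    | no {Γ} : Nf (.no : Tm Γ .ans)
    | unit {Γ} : Nf (.unit : Tm Γ .unit)
    | pair {Γ A B} {a : Tm Γ A} {b : Tm Γ B} : Nf a → Nf b → Nf (.pair a b)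
    | lam {Γ A B} {t : Tm (A :: Γ) B} : Nf t → Nf (.lam t)
    | ne_ans {Γ} {t : Tm Γ .ans} : Ne' t → Nf t

  /-- Neutral forms. -/
  inductive Ne' : ∀ {Γ : Ctx} {A : Ty}, Tm Γ A → Prop
    | var {Γ A} (v : Var Γ A) : Ne' (.var v)
    | fst {Γ A B} {p : Tm Γ (.prod A B)} : Ne' p → Ne' (.fst p)
    | snd {Γ A B} {p : Tm Γ (.prod A B)} : Ne' p → Ne' (.snd p)
    | app {Γ A B} {f : Tm Γ (.arrow A B)} {a : Tm Γ A} :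
        Ne' f → Nf a → Ne' (.app f a)
end

/-! Normalization by evaluation. Terms are interpreted in a Kripke model over renamings in
which `Ans` denotes its normal forms and a function value is a family of maps indexed by
renamings into its context, required to commute with renaming. A type-directed
`reify`/`reflect` pair reads values back as normal forms, and `nbe t` reifies `t` evaluated at
the environment of reflected variables.

Evaluation is invariant under βη, so `nbe` respects `Jeq`; a Kripke logical relation between
terms and values shows `Jeq t (nbe t)`, so equal normal forms give `Jeq`; and evaluating a
normal (resp. neutral) term at the reflected variables gives back the term (resp. its
reflection). -/

variable {Γ Δ Θ Θ' : Ctx} {A B : Ty}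

def Ren.id (Γ : Ctx) : Ren Γ Γ := fun _ v => v

def Ren.comp (r : Ren Θ Δ) (r' : Ren Δ Γ) : Ren Θ Γ := fun _ v => r _ (r' _ v)

@[simp] theorem Ren.id_apply (v : Var Γ A) : Ren.id Γ A v = v := rfl

@[simp] theorem Ren.comp_apply (r : Ren Θ Δ) (r' : Ren Δ Γ) (v : Var Γ A) :
    r.comp r' A v = r A (r' A v) := rfl

@[simp] theorem Ren.id_comp (r : Ren Θ Γ) : (Ren.id Θ).comp r = r := rfl

@[simp] theorem Ren.wk_apply (v : Var Γ B) : Ren.wk (A := A) B v = v.succ := rfl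

@[simp] theorem Ren.lift_zero (r : Ren Θ Γ) : r.lift A .zero = .zero := rfl

@[simp] theorem Ren.lift_comp_wk (r : Ren Θ Γ) : (r.lift (A := A)).comp Ren.wk = Ren.wk.comp r :=
  rfl

@[simp] theorem Ren.lift_id : (Ren.id Γ).lift (A := A) = Ren.id (A :: Γ) := by
  funext B v; cases v <;> rfl

@[simp] theorem Ren.lift_comp (r : Ren Θ Δ) (r' : Ren Δ Γ) :
    (r.lift (A := A)).comp r'.lift = (r.comp r').lift := by
  funext B v; cases v <;> rfl

@[simp] theorem rename_id (t : Tm Γ A) : rename (Ren.id Γ) t = t := by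
  induction t <;> simp_all [rename]

@[simp] theorem rename_rename (r : Ren Θ Δ) (r' : Ren Δ Γ) (t : Tm Γ A) :
    rename r (rename r' t) = rename (r.comp r') t := by
  induction t generalizing Δ Θ <;> simp_all [rename]

mutual
theorem Nf.rename {Γ Θ : Ctx} {A : Ty} {t : Tm Γ A} (r : Ren Θ Γ) :
    Nf t → Nf (_root_.rename r t)
  | .yes => .yes
  | .no => .no
  | .unit => .unit
  | .pair ha hb => .pair (ha.rename r) (hb.rename r)
  | .lam h => .lam (h.rename r.lift)
  | .ne_ans h => .ne_ans (h.rename r)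

theorem Ne'.rename {Γ Θ : Ctx} {A : Ty} {t : Tm Γ A} (r : Ren Θ Γ) :
    Ne' t → Ne' (_root_.rename r t)
  | .var v => .var (r _ v)
  | .fst h => .fst (h.rename r)
  | .snd h => .snd (h.rename r)
  | .app hf ha => .app (hf.rename r) (ha.rename r)
end

def Subst.id (Γ : Ctx) : Subst Γ Γ := fun _ v => .var v

def Subst.ofRen (r : Ren Θ Γ) : Subst Θ Γ := fun _ v => .var (r _ v)

def Subst.comp (τ : Subst Θ Δ) (σ : Subst Δ Γ) : Subst Θ Γ := fun _ v => subst τ (σ _ v)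

def Subst.cons (σ : Subst Θ Γ) (s : Tm Θ A) : Subst Θ (A :: Γ)
  | _, .zero => s
  | _, .succ v => σ _ v

theorem Subst.lift_ofRen (r : Ren Θ Γ) : (Subst.ofRen r).lift (A := A) = Subst.ofRen r.lift := by
  funext B v; cases v <;> rfl

theorem subst_ofRen (r : Ren Θ Γ) (t : Tm Γ A) : subst (Subst.ofRen r) t = rename r t := by
  induction t generalizing Θ <;> simp_all [subst, rename, Subst.lift_ofRen, Subst.ofRen]

theorem subst_id (t : Tm Γ A) : subst (Subst.id Γ) t = t :=
  (subst_ofRen (Ren.id Γ) t).trans (rename_id t)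

theorem subst_rename (σ : Subst Θ Δ) (r : Ren Δ Γ) (t : Tm Γ A) :
    subst σ (rename r t) = subst (fun B v => σ B (r B v)) t := by
  induction t generalizing Δ Θ with
  | lam t ih =>
    simp only [subst, rename, ih]
    congr 2; funext B v; cases v <;> rfl
  | _ => simp_all [subst, rename]

theorem rename_subst (r : Ren Θ Δ) (σ : Subst Δ Γ) (t : Tm Γ A) :
    rename r (subst σ t) = subst (fun B v => rename r (σ B v)) t := by
  induction t generalizing Δ Θ with
  | lam t ih =>
    simp only [subst, rename, ih]
    congr 2; funext B v; cases v <;> simp [Subst.lift, rename]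
  | _ => simp_all [subst, rename]

theorem subst_subst (τ : Subst Θ Δ) (σ : Subst Δ Γ) (t : Tm Γ A) :
    subst τ (subst σ t) = subst (τ.comp σ) t := by
  induction t generalizing Δ Θ with
  | lam t ih =>
    simp only [subst, ih]
    congr 2; funext B v; cases v
    · rfl
    · simp [Subst.comp, Subst.lift, subst_rename, rename_subst]
  | _ => simp_all [subst, Subst.comp]

theorem rename_subst1 (r : Ren Θ Γ) (a : Tm Γ A) (t : Tm (A :: Γ) B) :
    rename r (subst1 a t) = subst1 (rename r a) (rename r.lift t) := by
  unfold subst1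
  rw [rename_subst, subst_rename]
  congr 1; funext B v; cases v <;> rfl

theorem subst1_rename_subst_lift (σ : Subst Θ Γ) (r : Ren Θ' Θ) (s : Tm Θ' A)
    (t : Tm (A :: Γ) B) :
    subst1 s (rename r.lift (subst σ.lift t)) =
      subst (Subst.cons (fun B v => rename r (σ B v)) s) t := by
  rw [subst1, subst_rename]
  refine (subst_subst _ _ _).trans (congrArg (subst · t) ?_)
  funext B v; cases v
  · rfl
  · exact (subst_rename _ _ _).trans (subst_ofRen r _)

theorem Jeq.rename {t s : Tm Γ A} (r : Ren Θ Γ) (h : Jeq t s) :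
    Jeq (_root_.rename r t) (_root_.rename r s) := by
  induction h generalizing Θ with
  | refl t => exact .refl _
  | symm _ ih => exact (ih r).symm
  | trans _ _ ih₁ ih₂ => exact (ih₁ r).trans (ih₂ r)
  | pair_congr _ _ ih₁ ih₂ => exact .pair_congr (ih₁ r) (ih₂ r)
  | fst_congr _ ih => exact .fst_congr (ih r)
  | snd_congr _ ih => exact .snd_congr (ih r)
  | lam_congr _ ih => exact .lam_congr (ih r.lift)
  | app_congr _ _ ih₁ ih₂ => exact .app_congr (ih₁ r) (ih₂ r)
  | beta t a => rw [rename_subst1]; exact .beta _ _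
  | eta f => simpa [_root_.rename] using Jeq.eta (_root_.rename r f)
  | beta_fst a b => exact .beta_fst _ _
  | beta_snd a b => exact .beta_snd _ _
  | eta_pair p => exact .eta_pair _
  | eta_unit t => exact .eta_unit _

namespace NBE

structure RenFamily where
  Carrier : Ctx → Type
  ren : ∀ {Θ Γ : Ctx}, Ren Θ Γ → Carrier Γ → Carrier Θ

/-- Kripke function space. Naturality is what makes the model validate η for functions:
it is needed to commute evaluation with renaming. -/
@[ext]
structure NatFun (P Q : RenFamily) (Γ : Ctx) where
  app : ∀ Θ, Ren Θ Γ → P.Carrier Θ → Q.Carrier Θ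
  natural : ∀ Θ Θ' (r : Ren Θ Γ) (r' : Ren Θ' Θ) (a : P.Carrier Θ),
    Q.ren r' (app Θ r a) = app Θ' (r'.comp r) (P.ren r' a)

def RenFamily.prod (P Q : RenFamily) : RenFamily where
  Carrier Γ := P.Carrier Γ × Q.Carrier Γ
  ren r p := (P.ren r p.1, Q.ren r p.2)

def RenFamily.arrow (P Q : RenFamily) : RenFamily where
  Carrier := NatFun P Q
  ren r f := ⟨fun Θ r' a => f.app Θ (r'.comp r) a, fun _ _ _ _ _ => f.natural _ _ _ _ _⟩

def sem : Ty → RenFamily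
  | .unit => ⟨fun _ => PUnit, fun _ _ => .unit⟩
  | .ans => ⟨fun Γ => {t : Tm Γ .ans // Nf t}, fun r t => ⟨rename r t.1, t.2.rename r⟩⟩
  | .prod A B => (sem A).prod (sem B)
  | .arrow A B => (sem A).arrow (sem B)

abbrev Val (A : Ty) (Γ : Ctx) : Type := (sem A).Carrier Γ

def Val.ren (r : Ren Θ Γ) (a : Val A Γ) : Val A Θ := (sem A).ren r a

@[simp] theorem sem_ren (r : Ren Θ Γ) (a : Val A Γ) : (sem A).ren r a = a.ren r := rfl

theorem Val.ren_id : ∀ {A : Ty} {Γ : Ctx} (a : Val A Γ), a.ren (Ren.id Γ) = a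
  | .unit, _, _ => rfl
  | .ans, _, a => Subtype.ext (rename_id a.1)
  | .prod _ _, _, p => Prod.ext (ren_id p.1) (ren_id p.2)
  | .arrow _ _, _, _ => rfl

theorem Val.ren_ren : ∀ {A : Ty} {Γ Δ Θ : Ctx} (r : Ren Θ Δ) (r' : Ren Δ Γ) (a : Val A Γ),
    (a.ren r').ren r = a.ren (r.comp r')
  | .unit, _, _, _, _, _, _ => rfl
  | .ans, _, _, _, r, r', a => Subtype.ext (rename_rename r r' a.1)
  | .prod _ _, _, _, _, r, r', p => Prod.ext (ren_ren r r' p.1) (ren_ren r r' p.2)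
  | .arrow _ _, _, _, _, _, _, _ => rfl

def Val.app (f : Val (.arrow A B) Γ) (r : Ren Θ Γ) (a : Val A Θ) : Val B Θ :=
  NatFun.app f Θ r a

theorem Val.ren_app (f : Val (.arrow A B) Γ) (r : Ren Θ Γ) (r' : Ren Θ' Θ) (a : Val A Θ) :
    (f.app r a).ren r' = f.app (r'.comp r) (a.ren r') :=
  NatFun.natural f _ _ r r' a

@[simp] theorem Val.app_ren (f : Val (.arrow A B) Γ) (r : Ren Θ Γ) (r' : Ren Θ' Θ)
    (a : Val A Θ') : (f.ren r).app r' a = f.app (r'.comp r) a :=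
  rfl

theorem Val.arrow_ext {f g : Val (.arrow A B) Γ}
    (h : ∀ Θ (r : Ren Θ Γ) (a : Val A Θ), f.app r a = g.app r a) : f = g :=
  NatFun.ext (funext fun Θ => funext fun r => funext (h Θ r))

abbrev Env (Γ Θ : Ctx) : Type := ∀ A, Var Γ A → Val A Θ

def Env.ren (r : Ren Θ' Θ) (ρ : Env Γ Θ) : Env Γ Θ' := fun _ v => (ρ _ v).ren r

def Env.cons (ρ : Env Γ Θ) (a : Val A Θ) : Env (A :: Γ) Θ
  | _, .zero => a
  | _, .succ v => ρ _ v

theorem Env.ren_apply (r : Ren Θ' Θ) (ρ : Env Γ Θ) (v : Var Γ A) :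
    ρ.ren r A v = (ρ A v).ren r :=
  rfl

@[simp] theorem Env.cons_zero (ρ : Env Γ Θ) (a : Val A Θ) : ρ.cons a A .zero = a := rfl

@[simp] theorem Env.cons_succ (ρ : Env Γ Θ) (a : Val A Θ) (v : Var Γ B) :
    ρ.cons a B v.succ = ρ B v := rfl

theorem Env.ren_ren (r : Ren Θ' Δ) (r' : Ren Δ Θ) (ρ : Env Γ Θ) :
    (ρ.ren r').ren r = ρ.ren (r.comp r') := by
  funext A v; exact Val.ren_ren r r' (ρ A v)

theorem Env.ren_cons (r : Ren Θ' Θ) (ρ : Env Γ Θ) (a : Val A Θ) :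
    (ρ.cons a).ren r = (ρ.ren r).cons (a.ren r) := by
  funext B v; cases v <;> rfl

def IsNatural (f : ∀ Θ, Env Γ Θ → Val A Θ) : Prop :=
  ∀ Θ Θ' (ρ : Env Γ Θ) (r : Ren Θ' Θ), (f Θ ρ).ren r = f Θ' (ρ.ren r)

def evalNat : ∀ {Γ : Ctx} {A : Ty}, Tm Γ A →
    {f : ∀ Θ, Env Γ Θ → Val A Θ // IsNatural f}
  | _, _, .var v => ⟨fun _ ρ => ρ _ v, fun _ _ _ _ => rfl⟩
  | _, _, .yes => ⟨fun _ _ => ⟨.yes, .yes⟩, fun _ _ _ _ => rfl⟩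
  | _, _, .no => ⟨fun _ _ => ⟨.no, .no⟩, fun _ _ _ _ => rfl⟩
  | _, _, .unit => ⟨fun _ _ => .unit, fun _ _ _ _ => rfl⟩
  | _, _, .pair a b => ⟨fun Θ ρ => ((evalNat a).1 Θ ρ, (evalNat b).1 Θ ρ), fun _ _ ρ r =>
      Prod.ext ((evalNat a).2 _ _ ρ r) ((evalNat b).2 _ _ ρ r)⟩
  | _, _, .fst p => ⟨fun Θ ρ => ((evalNat p).1 Θ ρ).1, fun _ _ ρ r =>
      congrArg Prod.fst ((evalNat p).2 _ _ ρ r)⟩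
  | _, _, .snd p => ⟨fun Θ ρ => ((evalNat p).1 Θ ρ).2, fun _ _ ρ r =>
      congrArg Prod.snd ((evalNat p).2 _ _ ρ r)⟩
  | _, _, .app f a => ⟨fun Θ ρ => ((evalNat f).1 Θ ρ).app (Ren.id Θ) ((evalNat a).1 Θ ρ),
      fun _ _ ρ r => (Val.ren_app _ _ _ _).trans <| by
        beta_reduce; rw [← (evalNat f).2 _ _ ρ r, ← (evalNat a).2 _ _ ρ r]; rfl⟩
  | _, _, .lam t => ⟨fun Θ ρ => ⟨fun Θ' r a => (evalNat t).1 Θ' ((ρ.ren r).cons a),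
        fun _ _ r r' a => ((evalNat t).2 _ _ _ r').trans <| by
          rw [Env.ren_cons, Env.ren_ren]; rfl⟩,
      fun _ _ ρ r => NatFun.ext <| by funext Θ' r' a; simp only [Env.ren_ren]; rfl⟩

def eval (t : Tm Γ A) (ρ : Env Γ Θ) : Val A Θ := (evalNat t).1 Θ ρ

theorem ren_eval (t : Tm Γ A) (ρ : Env Γ Θ) (r : Ren Θ' Θ) :
    (eval t ρ).ren r = eval t (ρ.ren r) :=
  (evalNat t).2 _ _ ρ r

section
variable (ρ : Env Γ Θ)

@[simp] theorem eval_var (v : Var Γ A) : eval (.var v) ρ = ρ A v := rfl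

@[simp] theorem eval_pair (a : Tm Γ A) (b : Tm Γ B) :
    eval (.pair a b) ρ = ((eval a ρ, eval b ρ) : Val (.prod A B) Θ) := rfl

@[simp] theorem eval_fst (p : Tm Γ (.prod A B)) : eval (.fst p) ρ = (eval p ρ).1 := rfl

@[simp] theorem eval_snd (p : Tm Γ (.prod A B)) : eval (.snd p) ρ = (eval p ρ).2 := rfl

@[simp] theorem eval_app (f : Tm Γ (.arrow A B)) (a : Tm Γ A) :
    eval (.app f a) ρ = (eval f ρ).app (Ren.id Θ) (eval a ρ) := rfl

@[simp] theorem eval_lam_app (t : Tm (A :: Γ) B) (r : Ren Θ' Θ) (a : Val A Θ') :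
    (eval (.lam t) ρ).app r a = eval t ((ρ.ren r).cons a) := rfl

end

theorem eval_rename (r : Ren Δ Γ) (t : Tm Γ A) (ρ : Env Δ Θ) :
    eval (rename r t) ρ = eval t (fun B v => ρ B (r B v)) := by
  induction t generalizing Δ Θ with
  | var | yes | no | unit => rfl
  | pair a b iha ihb => rw [rename, eval_pair, eval_pair, iha, ihb]
  | fst p ih => simp only [rename, eval_fst, ih]
  | snd p ih => simp only [rename, eval_snd, ih]
  | app f a ihf iha => simp only [rename, eval_app, ihf, iha]
  | lam t ih =>
    refine Val.arrow_ext fun Θ' r' a => ?_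
    simp only [rename, eval_lam_app, ih]
    congr 1; funext B v; cases v <;> rfl

theorem eval_subst (σ : Subst Δ Γ) (t : Tm Γ A) (ρ : Env Δ Θ) :
    eval (subst σ t) ρ = eval t (fun B v => eval (σ B v) ρ) := by
  induction t generalizing Δ Θ with
  | var | yes | no | unit => rfl
  | pair a b iha ihb => rw [subst, eval_pair, eval_pair, iha, ihb]
  | fst p ih => simp only [subst, eval_fst, ih]
  | snd p ih => simp only [subst, eval_snd, ih]
  | app f a ihf iha => simp only [subst, eval_app, ihf, iha]
  | lam t ih =>
    refine Val.arrow_ext fun Θ' r' a => ?_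
    simp only [subst, eval_lam_app, ih]
    congr 1; funext B v; cases v
    · rfl
    · exact (eval_rename _ _ _).trans (ren_eval _ _ _).symm

theorem eval_eq_of_jeq {t s : Tm Γ A} (h : Jeq t s) (ρ : Env Γ Θ) : eval t ρ = eval s ρ := by
  induction h generalizing Θ with
  | refl => rfl
  | symm _ ih => exact (ih ρ).symm
  | trans _ _ ih₁ ih₂ => exact (ih₁ ρ).trans (ih₂ ρ)
  | pair_congr _ _ ih₁ ih₂ => rw [eval_pair, eval_pair, ih₁, ih₂]
  | fst_congr _ ih => simp only [eval_fst, ih]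
  | snd_congr _ ih => simp only [eval_snd, ih]
  | lam_congr _ ih => exact Val.arrow_ext fun Θ' r a => ih _
  | app_congr _ _ ih₁ ih₂ => simp only [eval_app, ih₁, ih₂]
  | beta t a =>
    simp only [eval_app, eval_lam_app, subst1, eval_subst]
    congr 1; funext B v; cases v <;> simp [Subst.single, Val.ren_id, Env.ren_apply]
  | eta f =>
    refine Val.arrow_ext fun Θ' r a => ?_
    simp [eval_rename, ← ren_eval]
  | beta_fst | beta_snd | eta_pair | eta_unit => rfl

/-- `reify`, `reflect` and their properties are defined together by recursion on the type:
reflecting a neutral of arrow type applies it to reified arguments, which must be normal, and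
the resulting function value must be natural. -/
structure ReadBack (A : Ty) where
  reify : ∀ {Γ : Ctx}, Val A Γ → Tm Γ A
  reflect : ∀ {Γ : Ctx} (t : Tm Γ A), Ne' t → Val A Γ
  nf_reify : ∀ {Γ : Ctx} (a : Val A Γ), Nf (reify a)
  rename_reify : ∀ {Γ Θ : Ctx} (r : Ren Θ Γ) (a : Val A Γ),
    rename r (reify a) = reify (a.ren r)
  ren_reflect : ∀ {Γ Θ : Ctx} (r : Ren Θ Γ) (t : Tm Γ A) (h : Ne' t),
    (reflect t h).ren r = reflect (rename r t) (h.rename r)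

theorem ReadBack.reflect_congr (R : ReadBack A) {t t' : Tm Γ A} (e : t = t') (h : Ne' t)
    (h' : Ne' t') : R.reflect t h = R.reflect t' h' := by
  subst e; rfl

def readBack : ∀ A, ReadBack A
  | .unit =>
    { reify := fun _ => .unit
      reflect := fun _ _ => PUnit.unit
      nf_reify := fun _ => .unit
      rename_reify := fun _ _ => rfl
      ren_reflect := fun _ _ _ => rfl }
  | .ans =>
    { reify := fun a => a.1
      reflect := fun t h => ⟨t, .ne_ans h⟩
      nf_reify := fun a => a.2
      rename_reify := fun _ _ => rfl
      ren_reflect := fun _ _ _ => rfl }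
  | .prod A B =>
    { reify := fun p => .pair ((readBack A).reify p.1) ((readBack B).reify p.2)
      reflect := fun t h => ((readBack A).reflect _ (.fst h), (readBack B).reflect _ (.snd h))
      nf_reify := fun p => .pair ((readBack A).nf_reify p.1) ((readBack B).nf_reify p.2)
      rename_reify := fun r p => by
        rw [rename, (readBack A).rename_reify, (readBack B).rename_reify]; rfl
      ren_reflect := fun r t h =>
        Prod.ext ((readBack A).ren_reflect r _ (.fst h)) ((readBack B).ren_reflect r _ (.snd h)) }
  | .arrow A B =>
    { reify := fun f =>
        .lam ((readBack B).reify (f.app Ren.wk ((readBack A).reflect _ (.var .zero))))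
      reflect := fun t h =>
        ⟨fun _ r a => (readBack B).reflect (.app (rename r t) ((readBack A).reify a))
            (.app (h.rename r) ((readBack A).nf_reify a)),
          fun _ _ r r' a => ((readBack B).ren_reflect _ _ _).trans <|
            (readBack B).reflect_congr (by simp [rename, (readBack A).rename_reify]) _ _⟩
      nf_reify := fun _ => .lam ((readBack B).nf_reify _)
      rename_reify := fun r f => by
        rw [rename, (readBack B).rename_reify, Val.ren_app, (readBack A).ren_reflect]; rfl
      ren_reflect := fun r t h => Val.arrow_ext fun _ r' a =>
        (readBack B).reflect_congr (by simp) _ _ }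

def Env.id (Γ : Ctx) : Env Γ Γ := fun A v => (readBack A).reflect (.var v) (.var v)

def nbe (t : Tm Γ A) : Tm Γ A := (readBack A).reify (eval t (Env.id Γ))

theorem nf_nbe (t : Tm Γ A) : Nf (nbe t) := (readBack A).nf_reify _

theorem nbe_eq_of_jeq {t s : Tm Γ A} (h : Jeq t s) : nbe t = nbe s :=
  congrArg (readBack A).reify (eval_eq_of_jeq h _)

def LogRel : ∀ (A : Ty) {Γ : Ctx}, Tm Γ A → Val A Γ → Prop
  | .unit, _, _, _ => True
  | .ans, _, t, a => Jeq t a.1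
  | .prod A B, _, t, p => LogRel A (.fst t) p.1 ∧ LogRel B (.snd t) p.2
  | .arrow A B, Γ, t, f => ∀ Θ (r : Ren Θ Γ) (s : Tm Θ A) (a : Val A Θ),
      LogRel A s a → LogRel B (.app (rename r t) s) (f.app r a)

theorem LogRel.of_jeq : ∀ {A : Ty} {Γ : Ctx} {t t' : Tm Γ A} {a : Val A Γ},
    Jeq t t' → LogRel A t a → LogRel A t' a
  | .unit, _, _, _, _, _, _ => trivial
  | .ans, _, _, _, _, h, ht => h.symm.trans ht
  | .prod _ _, _, _, _, _, h, ht => ⟨ht.1.of_jeq (.fst_congr h), ht.2.of_jeq (.snd_congr h)⟩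
  | .arrow _ _, _, _, _, _, h, ht => fun _ r s _ hs =>
      (ht _ r s _ hs).of_jeq (.app_congr (h.rename r) (.refl s))

theorem LogRel.rename : ∀ {A : Ty} {Γ Θ : Ctx} (r : Ren Θ Γ) {t : Tm Γ A} {a : Val A Γ},
    LogRel A t a → LogRel A (_root_.rename r t) (a.ren r)
  | .unit, _, _, _, _, _, _ => trivial
  | .ans, _, _, r, _, _, ht => Jeq.rename r ht
  | .prod _ _, _, _, r, _, _, ht => ⟨ht.1.rename r, ht.2.rename r⟩
  | .arrow _ _, _, _, r, _, _, ht => fun _ r' s _ hs => by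
      simpa using ht _ (r'.comp r) s _ hs

mutual
theorem jeq_reify_of_logRel : ∀ {A : Ty} {Γ : Ctx} {t : Tm Γ A} {a : Val A Γ},
    LogRel A t a → Jeq t ((readBack A).reify a)
  | .unit, _, t, _, _ => .eta_unit t
  | .ans, _, _, _, ht => ht
  | .prod _ _, _, t, _, ht =>
    (Jeq.eta_pair t).trans (.pair_congr (jeq_reify_of_logRel ht.1) (jeq_reify_of_logRel ht.2))
  | .arrow _ _, _, t, _, ht =>
    (Jeq.eta t).trans (.lam_congr (jeq_reify_of_logRel (ht _ Ren.wk _ _ (logRel_reflect (.var _)))))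

theorem logRel_reflect : ∀ {A : Ty} {Γ : Ctx} {t : Tm Γ A} (h : Ne' t),
    LogRel A t ((readBack A).reflect t h)
  | .unit, _, _, _ => trivial
  | .ans, _, t, _ => .refl t
  | .prod _ _, _, _, h => ⟨logRel_reflect (.fst h), logRel_reflect (.snd h)⟩
  | .arrow _ _, _, _, _ => fun _ _ _ _ hs =>
    (logRel_reflect _).of_jeq (.app_congr (.refl _) (jeq_reify_of_logRel hs).symm)
end

theorem logRel_eval (t : Tm Γ A) (σ : Subst Θ Γ) (ρ : Env Γ Θ)
    (hσ : ∀ B v, LogRel B (σ B v) (ρ B v)) : LogRel A (subst σ t) (eval t ρ) := by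
  induction t generalizing Θ with
  | var v => exact hσ _ v
  | yes | no => exact .refl _
  | unit => trivial
  | pair a b iha ihb =>
    exact ⟨(iha σ ρ hσ).of_jeq (Jeq.beta_fst _ _).symm,
      (ihb σ ρ hσ).of_jeq (Jeq.beta_snd _ _).symm⟩
  | fst p ih => exact (ih σ ρ hσ).1
  | snd p ih => exact (ih σ ρ hσ).2
  | app f a ihf iha => simpa [subst] using ihf σ ρ hσ Θ (Ren.id Θ) _ _ (iha σ ρ hσ)
  | lam t ih =>
    intro Θ' r s a hs
    have hσ' : ∀ B v, LogRel B (Subst.cons (fun B v => rename r (σ B v)) s B v)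
        ((ρ.ren r).cons a B v) := by
      intro B v
      cases v with
      | zero => exact hs
      | succ v => exact (hσ B v).rename r
    refine (ih _ _ hσ').of_jeq ?_
    rw [← subst1_rename_subst_lift]
    exact (Jeq.beta _ s).symm

theorem jeq_nbe (t : Tm Γ A) : Jeq t (nbe t) := by
  have h := logRel_eval t (Subst.id Γ) (Env.id Γ) fun B v => logRel_reflect (.var v)
  rw [subst_id] at h
  exact jeq_reify_of_logRel h

theorem jeq_of_nbe_eq {t s : Tm Γ A} (h : nbe t = nbe s) : Jeq t s :=
  (jeq_nbe t).trans (h ▸ (jeq_nbe s).symm)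

theorem Env.cons_ren_wk_id :
    ((Env.id Γ).ren Ren.wk).cons ((readBack A).reflect (.var .zero) (.var _)) =
      Env.id (A :: Γ) := by
  funext B v
  cases v with
  | zero => rfl
  | succ v => exact (readBack B).ren_reflect Ren.wk _ _

mutual
theorem reify_eval_id_of_nf {Γ : Ctx} {A : Ty} {t : Tm Γ A} :
    Nf t → (readBack A).reify (eval t (Env.id Γ)) = t
  | .yes | .no | .unit => rfl
  | .pair ha hb => congrArg₂ Tm.pair (reify_eval_id_of_nf ha) (reify_eval_id_of_nf hb)
  | .lam h => congrArg Tm.lam <| by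
      simp only [eval_lam_app, Env.cons_ren_wk_id]
      exact reify_eval_id_of_nf h
  | .ne_ans h => congrArg Subtype.val (eval_id_of_ne h)

theorem eval_id_of_ne {Γ : Ctx} {A : Ty} {t : Tm Γ A} :
    (h : Ne' t) → eval t (Env.id Γ) = (readBack A).reflect t h
  | .var _ => rfl
  | .fst h => congrArg Prod.fst (eval_id_of_ne h)
  | .snd h => congrArg Prod.snd (eval_id_of_ne h)
  | .app hf ha => by
      rw [eval_app, eval_id_of_ne hf]
      exact (readBack _).reflect_congr (by rw [rename_id, reify_eval_id_of_nf ha]) _ _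
end

theorem nbe_of_nf {t : Tm Γ A} (h : Nf t) : nbe t = t := reify_eval_id_of_nf h

end NBE

/-- Normalization: there is a function `nbe` on well-typed terms producing
normal forms, such that (1) βη-equal terms have equal normal forms, (2) terms
with equal normal forms are βη-equal, and (3) normal forms are fixed points. -/
theorem normalization :
    ∃ nbe : ∀ {Γ : Ctx} {A : Ty}, Tm Γ A → Tm Γ A,
      (∀ {Γ : Ctx} {A : Ty} (t : Tm Γ A), Nf (nbe t)) ∧
      (∀ {Γ : Ctx} {A : Ty} (t s : Tm Γ A), Jeq t s → nbe t = nbe s) ∧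
      (∀ {Γ : Ctx} {A : Ty} (t s : Tm Γ A), nbe t = nbe s → Jeq t s) ∧
      (∀ {Γ : Ctx} {A : Ty} (t : Tm Γ A), Nf t → nbe t = t) :=
  ⟨NBE.nbe, NBE.nf_nbe, fun _ _ => NBE.nbe_eq_of_jeq, fun _ _ => NBE.jeq_of_nbe_eq,
    fun _ => NBE.nbe_of_nf⟩
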